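/- Let (X₁,…,X_d) be an exchangeable sequence of random variables with values in a finite set 𝒳, let p be the distribution of (X₁,…,X_k) for k ≤ d, and let q(x₁,…,x_k) = ∑_{s ∈ 𝒳^d} p̃(s) ∏_{i=1}^k p̂_s(x_i), where p̃ is the distribution of (X₁,…,X_d) and p̂_s is the empirical distribution of s ∈ 𝒳^d. Then D(p‖q) ≤ log₂(d^k / d^{\underline{k}}). -/

import Mathlib

/-- Empirical distribution of a sequence `s ∈ 𝒳^d`: `p̂_s(c) = (1/d)∑_i 1{s_i = c}`. -/
noncomputable def empDist {𝒳 : Type*} [DecidableEq 𝒳] {d : ℕ} (s : Fin d → 𝒳) (c : 𝒳) : ℝ :=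
  (1 / d) * ∑ i, if s i = c then 1 else 0

/-!
By exchangeability, the law of `(s (φ 1), …, s (φ k))` under `p̃` is `p` for every injection
`φ : Fin k ↪ Fin d`. Averaging over the `d^{\underline k}` injections gives
`d^{\underline k} p(x) = ∑_s p̃(s) #{φ injective | s ∘ φ = x}`, while expanding the product of
empirical frequencies gives `d^k q(x) = ∑_s p̃(s) #{g arbitrary | s ∘ g = x}`. Hence
`p ≤ (d^k / d^{\underline k}) q` pointwise, and a density ratio bounded by `C` bounds the
divergence by `log C`.
-/

open Finset

section Marginal

variable {α ι 𝒳 : Type*} [Fintype α] [DecidableEq α] [Fintype 𝒳] [DecidableEq 𝒳] [Fintype ι]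

noncomputable def marginal (f : (α → 𝒳) → ℝ) (ψ : ι → α) (x : ι → 𝒳) : ℝ :=
  ∑ s, if ∀ i, s (ψ i) = x i then f s else 0

lemma marginal_nonneg {f : (α → 𝒳) → ℝ} (hf : ∀ s, 0 ≤ f s) (ψ : ι → α) (x : ι → 𝒳) :
    0 ≤ marginal f ψ x :=
  sum_nonneg fun s _ => ite_nonneg (hf s) le_rfl

lemma sum_marginal [DecidableEq ι] (f : (α → 𝒳) → ℝ) (ψ : ι → α) :
    ∑ x, marginal f ψ x = ∑ s, f s := by
  unfold marginal
  rw [sum_comm]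
  refine sum_congr rfl fun s _ => ?_
  simp_rw [← funext_iff]
  rw [sum_ite_eq]
  simp

lemma marginal_embedding_eq {f : (α → 𝒳) → ℝ}
    (hf : ∀ (σ : Equiv.Perm α) (s : α → 𝒳), f (s ∘ σ) = f s) (φ ψ : ι ↪ α) :
    marginal f φ = marginal f ψ := by
  obtain ⟨σ, hσ⟩ := Equiv.Perm.exists_extending_pair ψ φ ψ.injective φ.injective
  funext x
  refine Fintype.sum_equiv (σ.symm.arrowCongr (Equiv.refl 𝒳)) _ _ fun s => ?_
  have hcomp : (σ.symm.arrowCongr (Equiv.refl 𝒳)) s = s ∘ σ := rfl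
  simp [hcomp, hσ, hf]

lemma card_embedding_mul_marginal {f : (α → 𝒳) → ℝ}
    (hf : ∀ (σ : Equiv.Perm α) (s : α → 𝒳), f (s ∘ σ) = f s) (ψ : ι ↪ α) (x : ι → 𝒳) :
    Fintype.card (ι ↪ α) * marginal f ψ x = ∑ s, f s * #{φ : ι ↪ α | ∀ i, s (φ i) = x i} := by
  calc (Fintype.card (ι ↪ α) : ℝ) * marginal f ψ x = ∑ φ : ι ↪ α, marginal f φ x := by
        rw [sum_congr rfl fun φ _ => congrFun (marginal_embedding_eq hf φ ψ) x, sum_const,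
          card_univ, nsmul_eq_mul]
    _ = ∑ s, f s * #{φ : ι ↪ α | ∀ i, s (φ i) = x i} := by
        unfold marginal
        rw [sum_comm]
        simp [← sum_boole, mul_sum]

end Marginal

lemma empDist_nonneg {𝒳 : Type*} [DecidableEq 𝒳] {d : ℕ} (s : Fin d → 𝒳) (c : 𝒳) :
    0 ≤ empDist s c := by
  unfold empDist
  positivity

lemma prod_empDist {𝒳 ι : Type*} [DecidableEq 𝒳] [Fintype ι] [DecidableEq ι] {d : ℕ}
    (s : Fin d → 𝒳) (x : ι → 𝒳) :
    ∏ i, empDist s (x i) = #{g : ι → Fin d | ∀ i, s (g i) = x i} / d ^ Fintype.card ι := by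
  simp only [empDist, prod_mul_distrib, prod_const, card_univ, Fintype.prod_sum,
    Fintype.prod_boole]
  rw [sum_boole]
  ring

lemma marginal_le_mul_sum_prod_empDist {𝒳 ι : Type*} [Fintype 𝒳] [DecidableEq 𝒳] [Fintype ι]
    [DecidableEq ι] {d : ℕ} {f : (Fin d → 𝒳) → ℝ} (hf0 : ∀ s, 0 ≤ f s)
    (hf : ∀ (σ : Equiv.Perm (Fin d)) (s : Fin d → 𝒳), f (s ∘ σ) = f s) (ψ : ι ↪ Fin d)
    (x : ι → 𝒳) :
    marginal f ψ x ≤ (d : ℝ) ^ Fintype.card ι / d.descFactorial (Fintype.card ι) *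
      ∑ s, f s * ∏ i, empDist s (x i) := by
  have hcard : Fintype.card ι ≤ d := by simpa using Fintype.card_le_of_embedding ψ
  have hdesc : (0 : ℝ) < d.descFactorial (Fintype.card ι) := by
    exact_mod_cast Nat.descFactorial_pos.2 hcard
  have hpow : (d : ℝ) ^ Fintype.card ι ≠ 0 := by
    simp only [ne_eq, pow_eq_zero_iff', Nat.cast_eq_zero, not_and_or, not_not]
    omega
  have hcount (s : Fin d → 𝒳) :
      #{φ : ι ↪ Fin d | ∀ i, s (φ i) = x i} ≤ #{g : ι → Fin d | ∀ i, s (g i) = x i} :=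
    card_le_card_of_injOn (fun φ : ι ↪ Fin d => (φ : ι → Fin d)) (by simp [Set.MapsTo])
      fun _ _ _ _ h => DFunLike.coe_injective h
  rw [← mul_le_mul_iff_of_pos_left hdesc]
  calc d.descFactorial (Fintype.card ι) * marginal f ψ x
      = ∑ s, f s * #{φ : ι ↪ Fin d | ∀ i, s (φ i) = x i} := by
        simpa [Fintype.card_embedding_eq] using card_embedding_mul_marginal hf ψ x
    _ ≤ ∑ s, f s * #{g : ι → Fin d | ∀ i, s (g i) = x i} := by
        gcongr with s
        exacts [hf0 s, hcount s]
    _ = _ := by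
        simp only [prod_empDist, mul_sum]
        field_simp

lemma sum_mul_logb_div_le_logb_of_le_mul {ι : Type*} [Fintype ι] {b C : ℝ} (hb : 1 < b)
    {p q : ι → ℝ} (hp : ∀ i, 0 ≤ p i) (hp1 : ∑ i, p i = 1) (hq : ∀ i, 0 ≤ q i)
    (hpq : ∀ i, p i ≤ C * q i) :
    ∑ i, p i * Real.logb b (p i / q i) ≤ Real.logb b C := by
  calc ∑ i, p i * Real.logb b (p i / q i) ≤ ∑ i, p i * Real.logb b C :=
        sum_le_sum fun i _ => ?_
    _ = Real.logb b C := by rw [← sum_mul, hp1, one_mul]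
  rcases (hp i).eq_or_lt with h | h
  · simp [← h]
  have hqi : 0 < q i := (hq i).lt_of_ne fun h0 => by simpa [← h0] using h.trans_le (hpq i)
  exact mul_le_mul_of_nonneg_left
    (Real.logb_le_logb_of_le hb (div_pos h hqi) ((div_le_iff₀ hqi).2 (hpq i))) h.le

theorem stmt12_general {𝒳 : Type*} [Fintype 𝒳] [DecidableEq 𝒳] (d k : ℕ)
    (hkd : k ≤ d)
    (ptilde : (Fin d → 𝒳) → ℝ)
    (hp0 : ∀ s, 0 ≤ ptilde s) (hp1 : ∑ s, ptilde s = 1)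
    (hexch : ∀ (σ : Equiv.Perm (Fin d)) (s : Fin d → 𝒳), ptilde (s ∘ σ) = ptilde s)
    (p : (Fin k → 𝒳) → ℝ)
    (hp : ∀ x, p x = ∑ s, if (∀ i : Fin k, s (Fin.castLE hkd i) = x i) then ptilde s else 0)
    (q : (Fin k → 𝒳) → ℝ)
    (hq : ∀ x, q x = ∑ s, ptilde s * ∏ i : Fin k, empDist s (x i)) :
    ∑ x, p x * Real.logb 2 (p x / q x) ≤
      Real.logb 2 ((d : ℝ) ^ k / (d.descFactorial k : ℝ)) := by
  -- `congr!` reconciles the two `Decidable (∀ i : Fin k, _)` instances.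
  obtain rfl : p = marginal ptilde (Fin.castLE hkd) := funext fun x => by
    rw [hp, marginal]; congr!
  obtain rfl : q = fun x => ∑ s, ptilde s * ∏ i, empDist s (x i) := funext hq
  refine sum_mul_logb_div_le_logb_of_le_mul one_lt_two (marginal_nonneg hp0 _)
    (by rw [sum_marginal, hp1]) (fun x => ?_) fun x => ?_
  · exact sum_nonneg fun s _ => mul_nonneg (hp0 s) (prod_nonneg fun i _ => empDist_nonneg s _)
  · simpa using marginal_le_mul_sum_prod_empDist hp0 hexch (Fin.castLEEmb hkd) x

/-- Extended-urn bound: if `(X₁,…,X_d)` is exchangeable with distribution `p̃` on `𝒳^d`,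
`p` is the distribution of the first `k` coordinates, and
`q(x) = ∑_s p̃(s) ∏_{i=1}^k p̂_s(x_i)`, then `D(p‖q) ≤ log₂(d^k / d^{\underline{k}})`. -/
theorem stmt12 {𝒳 : Type*} [Fintype 𝒳] [DecidableEq 𝒳] (d k : ℕ) (hk : 0 < k)
    (hkd : k ≤ d)
    (ptilde : (Fin d → 𝒳) → ℝ)
    (hp0 : ∀ s, 0 ≤ ptilde s) (hp1 : ∑ s, ptilde s = 1)
    (hexch : ∀ (σ : Equiv.Perm (Fin d)) (s : Fin d → 𝒳), ptilde (s ∘ σ) = ptilde s)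
    (p : (Fin k → 𝒳) → ℝ)
    (hp : ∀ x, p x = ∑ s, if (∀ i : Fin k, s (Fin.castLE hkd i) = x i) then ptilde s else 0)
    (q : (Fin k → 𝒳) → ℝ)
    (hq : ∀ x, q x = ∑ s, ptilde s * ∏ i : Fin k, empDist s (x i)) :
    ∑ x, p x * Real.logb 2 (p x / q x) ≤
      Real.logb 2 ((d : ℝ) ^ k / (d.descFactorial k : ℝ)) :=
  stmt12_general d k hkd ptilde hp0 hp1 hexch p hp q hq
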